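/- arXiv:2001.10286 — 2 statements merged into one kernel-verified Lean document; each statement's English description precedes it below -/
import Mathlib

section
/- Let G be a finitely generated group and φ : G → ℝ a nontrivial homomorphism such that the preimage φ⁻¹((0,∞)) is a connected subset of the Cayley graph of G. If the kernel of φ is left-orderable, then G admits a positive cone which is a connected subset of the Cayley graph. (In particular, a left-orderable finitely generated group with non-empty BNS-invariant Σ¹ admits a connected positive cone.) -/
open scoped Pointwise

/-- A positive cone of a group `G`: a subsemigroup `P` such that
`G = P ⊔ P⁻¹ ⊔ {1}` (disjoint union). -/
def IsPositiveCone {G : Type*} [Group G] (P : Set G) : Prop :=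
  (∀ a ∈ P, ∀ b ∈ P, a * b ∈ P) ∧
  (∀ g : G, g ∈ P ∨ g⁻¹ ∈ P ∨ g = 1) ∧
  (∀ g ∈ P, g⁻¹ ∉ P) ∧
  (1 : G) ∉ P

/-- Word length of `g` with respect to the generating set `X`. -/
noncomputable def wordLength {G : Type*} [Group G] (X : Set G) (g : G) : ℕ :=
  sInf {n | ∃ l : List G, (∀ x ∈ l, x ∈ X) ∧ l.length = n ∧ l.prod = g}

/-- Word metric on `G` with respect to `X`. -/
noncomputable def wordDist {G : Type*} [Group G] (X : Set G) (g h : G) : ℕ :=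
  wordLength X (g⁻¹ * h)

/-- An `r`-path from `a` to `b` supported in `S` (consecutive word-metric
distances at most `r`). -/
def IsRPath {G : Type*} [Group G] (X : Set G) (r : ℕ) (S : Set G) (a b : G) : Prop :=
  ∃ l : List G, l ≠ [] ∧ l.head? = some a ∧ l.getLast? = some b ∧
    (∀ x ∈ l, x ∈ S) ∧ l.Chain' (fun u v => wordDist X u v ≤ r)

/-- `S` is `r`-coarsely connected in the Cayley graph `Γ(G,X)`. -/
def CoarselyConnectedWith {G : Type*} [Group G] (X : Set G) (r : ℕ) (S : Set G) : Prop :=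
  ∀ a ∈ S, ∀ b ∈ S, IsRPath X r S a b

/-- `X` is a finite symmetric generating set of `G`. -/
def IsGenSet {G : Type*} [Group G] (X : Set G) : Prop :=
  X.Finite ∧ (∀ x ∈ X, x⁻¹ ∈ X) ∧ Subgroup.closure X = ⊤

/-- A positive cone on a subset `K` of `G` (used for subgroups such as kernels). -/
def IsPositiveConeOn {G : Type*} [Group G] (K P : Set G) : Prop :=
  P ⊆ K ∧ (∀ a ∈ P, ∀ b ∈ P, a * b ∈ P) ∧ (∀ g ∈ K, g ∈ P ∨ g⁻¹ ∈ P ∨ g = 1) ∧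
  (∀ g ∈ P, g⁻¹ ∉ P) ∧ (1 : G) ∉ P

/-- The sub-semigroup generated by `S`: nonempty products of elements of `S`. -/
def SemigroupClosure {G : Type*} [Group G] (S : Set G) : Set G :=
  {g | ∃ l : List G, l ≠ [] ∧ (∀ x ∈ l, x ∈ S) ∧ l.prod = g}

/-!
The cone is the lexicographic one: `g` is positive when `φ g > 0`, or `φ g = 0` and `g` is
positive in `ker φ`. Its part `{φ > 0}` is connected by hypothesis, and every `a` in its kernel
part is adjacent to `a * x ∈ {φ > 0}`, where `x` is a generator with `φ x > 0`.
-/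

section WordMetric

variable {G : Type*} [Group G] {X : Set G} {r : ℕ} {S T : Set G} {a b c : G}

theorem wordLength_one (X : Set G) : wordLength X 1 = 0 :=
  Nat.eq_zero_of_le_zero (Nat.sInf_le ⟨[], by simp, rfl, rfl⟩)

theorem wordLength_le_one_of_mem {x : G} (hx : x ∈ X) : wordLength X x ≤ 1 :=
  Nat.sInf_le ⟨[x], by simpa using hx, rfl, by simp⟩

theorem wordDist_self (X : Set G) (a : G) : wordDist X a a = 0 := by
  rw [wordDist, inv_mul_cancel, wordLength_one]

theorem wordDist_mul_right_le_one {x : G} (hx : x ∈ X) (a : G) : wordDist X a (a * x) ≤ 1 := by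
  rw [wordDist, inv_mul_cancel_left]
  exact wordLength_le_one_of_mem hx

theorem wordDist_mul_right_left_le_one {x : G} (hx : x⁻¹ ∈ X) (a : G) :
    wordDist X (a * x) a ≤ 1 := by
  rw [wordDist, mul_inv_rev, inv_mul_cancel_right]
  exact wordLength_le_one_of_mem hx

namespace IsRPath

theorem refl (X : Set G) (r : ℕ) (ha : a ∈ S) : IsRPath X r S a a :=
  ⟨[a], by simp, rfl, rfl, by simpa using ha, List.isChain_singleton a⟩

theorem of_wordDist_le (ha : a ∈ S) (hb : b ∈ S) (hab : wordDist X a b ≤ r) :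
    IsRPath X r S a b := by
  refine ⟨[a, b], by simp, rfl, rfl, ?_, List.isChain_pair.mpr hab⟩
  simp only [List.mem_cons, List.not_mem_nil, or_false]
  rintro y (rfl | rfl) <;> assumption

theorem mono (hST : S ⊆ T) (h : IsRPath X r S a b) : IsRPath X r T a b := by
  obtain ⟨l, hne, hhead, hlast, hmem, hchain⟩ := h
  exact ⟨l, hne, hhead, hlast, fun x hx => hST (hmem x hx), hchain⟩

theorem trans (hab : IsRPath X r S a b) (hbc : IsRPath X r S b c) : IsRPath X r S a c := by
  obtain ⟨l₁, hne₁, hhead₁, hlast₁, hmem₁, hchain₁⟩ := hab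
  obtain ⟨l₂, -, hhead₂, hlast₂, hmem₂, hchain₂⟩ := hbc
  refine ⟨l₁ ++ l₂, by simp [hne₁], by simp [List.head?_append, hhead₁],
    by simp [List.getLast?_append, hlast₂], ?_, ?_⟩
  · intro x hx
    exact (List.mem_append.mp hx).elim (hmem₁ x) (hmem₂ x)
  · -- the junction repeats `b`, a step of length `0`
    refine List.isChain_append.mpr ⟨hchain₁, hchain₂, ?_⟩
    intro x hx y hy
    rw [hlast₁, Option.mem_some_iff] at hx
    rw [hhead₂, Option.mem_some_iff] at hy
    subst hx hy
    simp [wordDist_self]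

end IsRPath

theorem CoarselyConnectedWith.of_subset_of_forall_isRPath (hS : CoarselyConnectedWith X r S)
    (hST : S ⊆ T) (h : ∀ a ∈ T, ∃ s ∈ S, IsRPath X r T a s ∧ IsRPath X r T s a) :
    CoarselyConnectedWith X r T := by
  intro a ha b hb
  obtain ⟨s, hs, has, -⟩ := h a ha
  obtain ⟨t, ht, -, htb⟩ := h b hb
  exact (has.trans ((hS s hs t ht).mono hST)).trans htb

end WordMetric

section Homomorphism

variable {G : Type*} [Group G] {φ : G → ℝ}

theorem map_one_eq_zero_of_map_mul (hφ : ∀ a b : G, φ (a * b) = φ a + φ b) : φ 1 = 0 := by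
  have := hφ 1 1
  rw [mul_one] at this
  linarith

theorem map_inv_eq_neg_of_map_mul (hφ : ∀ a b : G, φ (a * b) = φ a + φ b) (g : G) :
    φ g⁻¹ = -φ g := by
  have := hφ g g⁻¹
  rw [mul_inv_cancel, map_one_eq_zero_of_map_mul hφ] at this
  linarith

theorem exists_mem_pos_of_map_mul {X : Set G} (hXinv : ∀ x ∈ X, x⁻¹ ∈ X)
    (hXgen : Subgroup.closure X = ⊤) (hφ : ∀ a b : G, φ (a * b) = φ a + φ b)
    (hnt : ∃ g : G, φ g ≠ 0) : ∃ x ∈ X, 0 < φ x := by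
  by_contra! hle
  have hzero : ∀ x ∈ X, φ x = 0 := fun x hx => by
    have := hle x⁻¹ (hXinv x hx)
    rw [map_inv_eq_neg_of_map_mul hφ] at this
    linarith [hle x hx]
  obtain ⟨g, hg⟩ := hnt
  refine hg (Subgroup.closure_induction (p := fun g _ => φ g = 0) hzero (map_one_eq_zero_of_map_mul hφ)
    (fun a b _ _ ha hb => ?_) (fun a _ ha => ?_) (hXgen ▸ Subgroup.mem_top g))
  · rw [hφ, ha, hb, add_zero]
  · rw [map_inv_eq_neg_of_map_mul hφ, ha, neg_zero]

def lexCone (φ : G → ℝ) (PK : Set G) : Set G :=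
  {g | 0 < φ g} ∪ PK

theorem isPositiveCone_lexCone (hφ : ∀ a b : G, φ (a * b) = φ a + φ b) {PK : Set G}
    (hPK : IsPositiveConeOn {g | φ g = 0} PK) : IsPositiveCone (lexCone φ PK) := by
  obtain ⟨hsub, hmul, htri, hasymm, hone⟩ := hPK
  have hker : ∀ g ∈ PK, φ g = 0 := fun g hg => hsub hg
  have hinv := map_inv_eq_neg_of_map_mul hφ
  refine ⟨?_, fun g => ?_, ?_, ?_⟩
  · rintro a (ha | ha) b (hb | hb)
    · exact Or.inl (show 0 < φ (a * b) by rw [hφ]; exact add_pos ha hb)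
    · exact Or.inl (show 0 < φ (a * b) by rw [hφ, hker b hb, add_zero]; exact ha)
    · exact Or.inl (show 0 < φ (a * b) by rw [hφ, hker a ha, zero_add]; exact hb)
    · exact Or.inr (hmul a ha b hb)
  · rcases lt_trichotomy (φ g) 0 with hneg | hzero | hpos
    · exact Or.inr (Or.inl (Or.inl (show 0 < φ g⁻¹ by rw [hinv]; linarith)))
    · rcases htri g hzero with hg | hg | rfl
      · exact Or.inl (Or.inr hg)
      · exact Or.inr (Or.inl (Or.inr hg))
      · exact Or.inr (Or.inr rfl)
    · exact Or.inl (Or.inl hpos)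
  · rintro g (hg | hg) (hg' | hg')
    · simp only [Set.mem_ofPred_eq, hinv] at hg hg'; linarith
    · simp only [Set.mem_ofPred_eq] at hg; linarith [hinv g, hker _ hg']
    · simp only [Set.mem_ofPred_eq, hinv, hker g hg] at hg'; linarith
    · exact hasymm g hg hg'
  · rintro (h | h)
    · simp only [Set.mem_ofPred_eq, map_one_eq_zero_of_map_mul hφ] at h; linarith
    · exact hone h

end Homomorphism

/-- if `φ : G → ℝ` is a nontrivial homomorphism with
`φ⁻¹((0,∞))` connected in the Cayley graph, and `ker φ` is left-orderable, then
`G` admits a connected positive cone. -/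
theorem stmt_6 {G : Type*} [Group G] (X : Set G) (hX : IsGenSet X)
    (φ : G → ℝ) (hφ : ∀ a b : G, φ (a * b) = φ a + φ b)
    (hnt : ∃ g : G, φ g ≠ 0)
    (hconn : CoarselyConnectedWith X 1 {g : G | 0 < φ g})
    (PK : Set G) (hPK : IsPositiveConeOn {g : G | φ g = 0} PK) :
    ∃ P : Set G, IsPositiveCone P ∧ CoarselyConnectedWith X 1 P := by
  obtain ⟨-, hXinv, hXgen⟩ := hX
  obtain ⟨x, hxX, hxpos⟩ := exists_mem_pos_of_map_mul hXinv hXgen hφ hnt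
  refine ⟨lexCone φ PK, isPositiveCone_lexCone hφ hPK,
    hconn.of_subset_of_forall_isRPath Set.subset_union_left ?_⟩
  rintro a (ha | ha)
  · exact ⟨a, ha, .refl X 1 (Or.inl ha), .refl X 1 (Or.inl ha)⟩
  · have hax : 0 < φ (a * x) := by rw [hφ, hPK.1 ha, zero_add]; exact hxpos
    refine ⟨a * x, hax, .of_wordDist_le (Or.inr ha) (Or.inl hax) ?_,
      .of_wordDist_le (Or.inl hax) (Or.inr ha) ?_⟩
    · exact wordDist_mul_right_le_one hxX a
    · exact wordDist_mul_right_left_le_one (hXinv x hxX) a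
end

section
/- If P is a positive cone of a group G that is finitely generated as a sub-semigroup, and X is any finite symmetric generating set of G, then P is a coarsely connected subset of the Cayley graph Γ(G,X): there exists r ≥ 1 such that any two elements of P are joined by an r-path supported in P. -/
open scoped Pointwise

/-!
Write `P = ⟨S⟩⁺` with `S` finite and let `r` bound the word lengths of the elements of `S`.
For `a, b ∈ P` the cone trichotomy gives `a⁻¹ b ∈ P`, `b⁻¹ a ∈ P` or `a = b`. In the first case
`a⁻¹ b = s₁ ⋯ sₖ` with `sᵢ ∈ S`, and the partial products `a s₁ ⋯ sᵢ` form an `r`-path from `a`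
to `b` that stays in `P` because `P` is a semigroup containing `S`. The second case is the first
one reversed, which is legitimate because the word metric of a symmetric set is symmetric.
-/

open Relation

section WordMetric

variable {G : Type*} [Group G] {X : Set G}

lemma exists_word_inv (hX : ∀ x ∈ X, x⁻¹ ∈ X) {n : ℕ} {g : G}
    (h : ∃ l : List G, (∀ x ∈ l, x ∈ X) ∧ l.length = n ∧ l.prod = g) :
    ∃ l : List G, (∀ x ∈ l, x ∈ X) ∧ l.length = n ∧ l.prod = g⁻¹ := by
  obtain ⟨l, hlX, rfl, rfl⟩ := h
  refine ⟨(l.map (·⁻¹)).reverse, ?_, by simp, (List.prod_inv_reverse l).symm⟩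
  simp only [List.mem_reverse, List.mem_map]
  rintro _ ⟨x, hx, rfl⟩
  exact hX x (hlX x hx)

lemma wordLength_inv (hX : ∀ x ∈ X, x⁻¹ ∈ X) (g : G) :
    wordLength X g⁻¹ = wordLength X g := by
  unfold wordLength
  congr 1
  ext n
  exact ⟨fun h => inv_inv g ▸ exists_word_inv hX h, exists_word_inv hX⟩

lemma wordDist_comm (hX : ∀ x ∈ X, x⁻¹ ∈ X) (g h : G) : wordDist X g h = wordDist X h g := by
  rw [wordDist, wordDist, ← wordLength_inv hX, mul_inv_rev, inv_inv]

lemma wordDist_mul_right (g h : G) : wordDist X g (g * h) = wordLength X h := by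
  simp [wordDist]

end WordMetric

section RPath

variable {G : Type*} [Group G] {X : Set G} {r : ℕ} {S : Set G}

/-- `r`-paths in `S` are the chains of this relation. -/
def IsRStep (X : Set G) (r : ℕ) (S : Set G) (u v : G) : Prop :=
  u ∈ S ∧ v ∈ S ∧ wordDist X u v ≤ r

lemma IsRStep.symm (hX : ∀ x ∈ X, x⁻¹ ∈ X) {u v : G} (h : IsRStep X r S u v) :
    IsRStep X r S v u :=
  ⟨h.2.1, h.1, wordDist_comm hX v u ▸ h.2.2⟩

lemma isRPath_of_reflTransGen {a b : G} (h : ReflTransGen (IsRStep X r S) a b) (ha : a ∈ S) :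
    IsRPath X r S a b := by
  obtain ⟨l, hne, hchain, hhead, hlast⟩ := List.exists_isChain_ne_nil_of_relationReflTransGen h
  refine ⟨l, hne, by rw [List.head?_eq_some_head hne, hhead],
    by rw [List.getLast?_eq_some_getLast hne, hlast], ?_, hchain.imp fun _ _ huv => huv.2.2⟩
  exact hchain.induction (· ∈ S) l (fun _ _ huv _ => huv.2.1) (fun _ => hhead ▸ ha)

lemma reflTransGen_isRStep_symm (hX : ∀ x ∈ X, x⁻¹ ∈ X) {a b : G}
    (h : ReflTransGen (IsRStep X r S) a b) : ReflTransGen (IsRStep X r S) b a :=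
  haveI : Std.Symm (IsRStep X r S) := ⟨fun _ _ => IsRStep.symm hX⟩
  symm h

end RPath

section Semigroup

variable {G : Type*} [Group G] {X : Set G} {r : ℕ} {P T : Set G}

lemma subset_semigroupClosure : T ⊆ SemigroupClosure T :=
  fun t ht => ⟨[t], List.cons_ne_nil t [], by simpa using ht, List.prod_singleton⟩

lemma reflTransGen_mul_prod (hmul : ∀ a ∈ P, ∀ b ∈ P, a * b ∈ P) (hTP : T ⊆ P)
    (hTr : ∀ t ∈ T, wordLength X t ≤ r) {l : List G} (hl : ∀ t ∈ l, t ∈ T) {a : G}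
    (ha : a ∈ P) : ReflTransGen (IsRStep X r P) a (a * l.prod) := by
  induction l generalizing a with
  | nil => simpa using ReflTransGen.refl
  | cons t l ih =>
    have ht : t ∈ T := hl t List.mem_cons_self
    have hat : a * t ∈ P := hmul a ha t (hTP ht)
    rw [List.prod_cons, ← mul_assoc]
    refine ReflTransGen.head ⟨ha, hat, ?_⟩ (ih (fun s hs => hl s (List.mem_cons_of_mem t hs)) hat)
    exact (wordDist_mul_right a t).trans_le (hTr t ht)

lemma reflTransGen_of_inv_mul_mem_semigroupClosure (hmul : ∀ a ∈ P, ∀ b ∈ P, a * b ∈ P)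
    (hTP : T ⊆ P) (hTr : ∀ t ∈ T, wordLength X t ≤ r) {a b : G} (ha : a ∈ P)
    (hab : a⁻¹ * b ∈ SemigroupClosure T) : ReflTransGen (IsRStep X r P) a b := by
  obtain ⟨l, -, hl, hprod⟩ := hab
  simpa [hprod] using reflTransGen_mul_prod hmul hTP hTr hl ha

end Semigroup

lemma IsPositiveCone.inv_mul_mem_or {G : Type*} [Group G] {P : Set G} (hP : IsPositiveCone P)
    (a b : G) : a⁻¹ * b ∈ P ∨ b⁻¹ * a ∈ P ∨ a = b := by
  rcases hP.2.1 (a⁻¹ * b) with h | h | h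
  · exact Or.inl h
  · exact Or.inr (Or.inl (by simpa using h))
  · exact Or.inr (Or.inr (inv_mul_eq_one.mp h))

/-- a positive cone that is finitely generated as a sub-semigroup
is coarsely connected in any Cayley graph. -/
theorem stmt_8 {G : Type*} [Group G] (X : Set G) (hX : IsGenSet X)
    (P : Set G) (hP : IsPositiveCone P)
    (S : Finset G) (hS : P = SemigroupClosure (S : Set G)) :
    ∃ r : ℕ, 1 ≤ r ∧ CoarselyConnectedWith X r P := by
  set r := S.sup (wordLength X) + 1
  have hSr : ∀ s ∈ (S : Set G), wordLength X s ≤ r :=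
    fun s hs => (Finset.le_sup (f := wordLength X) hs).trans (Nat.le_succ _)
  have hSP : (S : Set G) ⊆ P := hS ▸ subset_semigroupClosure
  have hpath : ∀ a ∈ P, ∀ b, a⁻¹ * b ∈ P → ReflTransGen (IsRStep X r P) a b :=
    fun a ha b hab => reflTransGen_of_inv_mul_mem_semigroupClosure hP.1 hSP hSr ha (hS ▸ hab)
  refine ⟨r, Nat.le_add_left 1 _, fun a ha b hb => isRPath_of_reflTransGen ?_ ha⟩
  rcases hP.inv_mul_mem_or a b with h | h | rfl
  · exact hpath a ha b h
  · exact reflTransGen_isRStep_symm hX.2.1 (hpath b hb a h)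
  · exact ReflTransGen.refl
end
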